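/- arXiv:1705.04883 — 4 statements merged into one kernel-verified Lean document; each statement's English description precedes it below -/
import Mathlib

section
/- There exists a finite bipartite simple graph G (in the paper, a planar graph obtained by gluing nine copies of the 3-dimensional cube graph) together with a 3-fold cover (H, L) of G such that G admits no (H, L)-coloring; in particular, the DP-chromatic number of G is at least 4. -/
open SimpleGraph

/-- A cover `(H, L)` of a simple graph `G` in the sense of Dvořák and Postle:
(C1) the sets `L u` partition the vertices of `H`;
(C2) each `L u` induces a complete subgraph of `H`;
(C3) edges of `H` between `L u` and `L v` (for `u ≠ v`) exist only when `uv ∈ E(G)`;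
(C4) for every edge `uv` of `G`, the edges of `H` between `L u` and `L v` form a matching. -/
structure DPCover {V : Type*} {W : Type*} (G : SimpleGraph V) (H : SimpleGraph W) where
  L : V → Finset W
  part : ∀ w : W, ∃! u : V, w ∈ L u
  clique : ∀ u : V, ∀ x ∈ L u, ∀ y ∈ L u, x ≠ y → H.Adj x y
  cross : ∀ u v : V, ∀ x ∈ L u, ∀ y ∈ L v, H.Adj x y → u = v ∨ G.Adj u v
  matching : ∀ u v : V, G.Adj u v → ∀ x ∈ L u, ∀ y ∈ L v, ∀ y' ∈ L v,
      H.Adj x y → H.Adj x y' → y = y'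

/-- A cover is `k`-fold if every list `L u` has exactly `k` elements. -/
def DPCover.IsFold {V W : Type*} {G : SimpleGraph V} {H : SimpleGraph W}
    (C : DPCover G H) (k : ℕ) : Prop :=
  ∀ u : V, (C.L u).card = k

/-- `G` admits an `(H, L)`-coloring: an independent set of `H` meeting each `L u` exactly once. -/
def DPCover.HasColoring {V W : Type*} {G : SimpleGraph V} {H : SimpleGraph W}
    (C : DPCover G H) : Prop :=
  ∃ I : Set W, (∀ x ∈ I, ∀ y ∈ I, ¬ H.Adj x y) ∧ (∀ u : V, ∃! x : W, x ∈ I ∧ x ∈ C.L u)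

/-- `G` admits a coloring with respect to every `k`-fold cover; `χ_DP(G)` is the least such `k`. -/
def DPColorable {V : Type*} (G : SimpleGraph V) (k : ℕ) : Prop :=
  ∀ (W : Type) (H : SimpleGraph W) (C : DPCover G H), C.IsFold k → C.HasColoring

/-!
The graph is `K_{3,6}`, with the cover over the colors `ℤ/3` in which the edge from the left
vertex `i` to the right vertex `r = (p, q) ∈ Fin 2 × Fin 3` is the matching
`a ↦ a + s_r(i)`, with shift vector `s_r = (0, p, q)`. A coloring `c` of the left side
forbids at `r` the colors `c i + s_r(i)`; choosing `p` with `c₁ + p ≠ c₀` and then `q` with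
`c₂ + q` the third color, some right vertex has all three colors forbidden.
-/

variable {V α : Type*}

theorem mem_singleton_product_univ [Fintype α] {u : V} {x : V × α} :
    x ∈ ({u} ×ˢ Finset.univ : Finset (V × α)) ↔ x.1 = u := by
  simp only [Finset.mem_product, Finset.mem_singleton, Finset.mem_univ, and_true]

variable [AddGroup α]

def shiftCoverGraph (G : SimpleGraph V) (σ : V → V → α)
    (hσ : ∀ u v, G.Adj u v → σ v u = -σ u v) : SimpleGraph (V × α) where
  Adj x y := (x.1 = y.1 ∧ x.2 ≠ y.2) ∨ (G.Adj x.1 y.1 ∧ y.2 = x.2 + σ x.1 y.1)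
  symm := ⟨by
    rintro x y (⟨h₁, h₂⟩ | ⟨hG, h⟩)
    · exact .inl ⟨h₁.symm, h₂.symm⟩
    · exact .inr ⟨hG.symm, by rw [hσ _ _ hG, h, add_neg_cancel_right]⟩⟩
  loopless := ⟨fun x h => h.elim (fun h => h.2 rfl) (fun h => G.loopless.irrefl _ h.1)⟩

variable {G : SimpleGraph V} {σ : V → V → α} {hσ : ∀ u v, G.Adj u v → σ v u = -σ u v}

namespace DPCover

variable [Fintype α]

def shift (G : SimpleGraph V) (σ : V → V → α)
    (hσ : ∀ u v, G.Adj u v → σ v u = -σ u v) :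
    DPCover G (shiftCoverGraph G σ hσ) where
  L u := {u} ×ˢ Finset.univ
  part w := ⟨w.1, by simp, fun u h => (mem_singleton_product_univ.mp h).symm⟩
  clique := by
    simp only [mem_singleton_product_univ]
    rintro u x rfl y hy hxy
    exact .inl ⟨hy.symm, fun h => hxy (Prod.ext hy.symm h)⟩
  cross := by
    simp only [mem_singleton_product_univ]
    rintro u v x rfl y rfl (h | h)
    exacts [.inl h.1, .inr h.1]
  matching := by
    simp only [mem_singleton_product_univ]
    rintro u v huv x rfl y hy y' hy' (h | h) (h' | h')
    · exact absurd (h.1.trans hy) huv.ne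
    · exact absurd (h.1.trans hy) huv.ne
    · exact absurd (h'.1.trans hy') huv.ne
    · exact Prod.ext (hy.trans hy'.symm) (by rw [h.2, h'.2, hy, hy'])

theorem shift_isFold : (shift G σ hσ).IsFold (Fintype.card α) := fun u => by
  simp [shift]

theorem shift_hasColoring_iff : (shift G σ hσ).HasColoring ↔
    ∃ c : V → α, ∀ u v, G.Adj u v → c v ≠ c u + σ u v := by
  constructor
  · rintro ⟨I, hI, hmeet⟩
    choose x hxI hxL using fun u => (hmeet u).exists
    have hx : ∀ u, x u = (u, (x u).2) := fun u =>
      Prod.ext (mem_singleton_product_univ.mp (hxL u)) rfl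
    refine ⟨fun u => (x u).2, fun u v huv h => hI _ (hxI u) _ (hxI v) ?_⟩
    rw [hx u, hx v]
    exact .inr ⟨huv, h⟩
  · rintro ⟨c, hc⟩
    refine ⟨Set.range fun u => (u, c u), ?_, fun u =>
      ⟨(u, c u), ⟨⟨u, rfl⟩, mem_singleton_product_univ.mpr rfl⟩, ?_⟩⟩
    · rintro _ ⟨u, rfl⟩ _ ⟨v, rfl⟩ (h | h)
      exacts [h.2 (congrArg c h.1), hc u v h.1 h.2]
    · rintro _ ⟨⟨v, rfl⟩, hv⟩
      obtain rfl := mem_singleton_product_univ.mp hv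
      rfl

end DPCover

section CompleteBipartite

variable {A B : Type*}

def bipartiteShift (τ : A → B → α) : A ⊕ B → A ⊕ B → α
  | .inl a, .inr b => τ a b
  | .inr b, .inl a => -τ a b
  | _, _ => 0

theorem bipartiteShift_swap (τ : A → B → α) (u v : A ⊕ B) :
    bipartiteShift τ v u = -bipartiteShift τ u v := by
  rcases u with a | b <;> rcases v with a' | b' <;> simp [bipartiteShift]

theorem not_hasColoring_shift_completeBipartiteGraph [Fintype α] (τ : A → B → α)
    (hτ : ∀ c : A → α, ∃ b, ∀ x, ∃ a, x = c a + τ a b) :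
    ¬(DPCover.shift (completeBipartiteGraph A B) (bipartiteShift τ)
      fun u v _ => bipartiteShift_swap τ u v).HasColoring := by
  rw [DPCover.shift_hasColoring_iff]
  rintro ⟨c, hc⟩
  obtain ⟨b, hb⟩ := hτ (c ∘ .inl)
  obtain ⟨a, ha⟩ := hb (c (.inr b))
  exact hc (.inl a) (.inr b) (by simp) ha

end CompleteBipartite

def k36Shift (i : Fin 3) (r : Fin 2 × Fin 3) : Fin 3 :=
  ![0, r.1.castSucc, r.2] i

theorem exists_k36Shift_forall_eq (c : Fin 3 → Fin 3) :
    ∃ r, ∀ x, ∃ i, x = c i + k36Shift i r := by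
  revert c
  decide

/-- There is a finite bipartite simple graph `G` together with a 3-fold cover `(H, L)`
admitting no `(H, L)`-coloring; in particular `χ_DP(G) ≥ 4`. -/
theorem exists_bipartite_with_bad_threefold_cover :
    ∃ (V : Type) (_ : Fintype V) (G : SimpleGraph V),
      G.Colorable 2 ∧
      (∃ (W : Type) (H : SimpleGraph W) (C : DPCover G H),
        C.IsFold 3 ∧ ¬ C.HasColoring) ∧
      ¬ DPColorable G 3 := by
  let C := DPCover.shift (completeBipartiteGraph (Fin 3) (Fin 2 × Fin 3)) (bipartiteShift k36Shift)
    fun u v _ => bipartiteShift_swap k36Shift u v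
  have hfold : C.IsFold 3 := DPCover.shift_isFold
  have hbad : ¬C.HasColoring :=
    not_hasColoring_shift_completeBipartiteGraph k36Shift exists_k36Shift_forall_eq
  refine ⟨_, inferInstance, completeBipartiteGraph (Fin 3) (Fin 2 × Fin 3), ?_,
    ⟨_, _, C, hfold, hbad⟩, fun h => hbad (h _ _ C hfold)⟩
  simpa using (CompleteBipartiteGraph.bicoloring (Fin 3) (Fin 2 × Fin 3)).colorable
end

section
/- Let d ≥ 2 and let G be a finite simple graph with at least one vertex that is d-regular (every vertex has degree exactly d). Then the DP-chromatic index of G is at least d + 1; that is, there exists a d-fold cover (H, L) of the line graph Line(G) such that Line(G) admits no (H, L)-coloring. -/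
open SimpleGraph

/-!
Cover `Line(G)` by `E(G) × ℤ/d`. Orient every edge; the vertex `(e, x)` shows the colour `x` at
the tail of `e` and `-x` at its head, shifted by a twist `τ` at the darts, and two edges through
a vertex conflict exactly when they show the same colour there. In a colouring the `d` edges at a
vertex show pairwise distinct colours, hence all of `ℤ/d`, so the colours shown at all darts sum
to `|V| · ∑ ℤ/d`. But each edge contributes `x - x = 0` to that sum, leaving only `∑ τ`. A single
twist of value `|V| · ∑ ℤ/d + 1` therefore rules out every colouring.
-/

open Finset

namespace SimpleGraph

variable {V R : Type*} {G : SimpleGraph V}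

theorem Dart.fst_mem_edge (d : G.Dart) : d.fst ∈ d.edge :=
  Sym2.mem_mk_left _ _

theorem Dart.eq_of_fst_eq_of_edge_eq {d d' : G.Dart} (hfst : d.fst = d'.fst)
    (hedge : d.edge = d'.edge) : d = d' := by
  rcases (dart_edge_eq_iff d d').1 hedge with h | rfl
  · exact h
  · exact absurd hfst d'.snd_ne_fst

-- Any orientation works; a well-order of `V` provides one.
variable (R) in
noncomputable def dartSign [Ring R] (d : G.Dart) : Rˣ :=
  open scoped Classical in if WellOrderingRel d.fst d.snd then 1 else -1

theorem dartSign_symm [Ring R] (d : G.Dart) : dartSign R d.symm = -dartSign R d := by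
  classical
  unfold dartSign
  rcases trichotomous_of WellOrderingRel d.fst d.snd with h | h | h
  · simp [h, asymm h]
  · exact absurd h d.fst_ne_snd
  · simp [h, asymm h]

section TwistedCover

variable [Ring R] (σ : G.Dart → Rˣ) (τ : G.Dart → R)

def twistedCoverGraph : SimpleGraph (G.edgeSet × R) where
  Adj p q := (p.1 = q.1 ∧ p.2 ≠ q.2) ∨ (p.1 ≠ q.1 ∧ ∃ d d' : G.Dart, d.fst = d'.fst ∧
    d.edge = p.1 ∧ d'.edge = q.1 ∧ σ d * p.2 + τ d = σ d' * q.2 + τ d')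
  symm := ⟨by
    rintro p q (⟨h, hx⟩ | ⟨h, d, d', hfst, hd, hd', hcol⟩)
    · exact Or.inl ⟨h.symm, hx.symm⟩
    · exact Or.inr ⟨Ne.symm h, d', d, hfst.symm, hd', hd, hcol.symm⟩⟩
  loopless := ⟨by
    rintro p (⟨-, h⟩ | ⟨h, -⟩) <;> exact h rfl⟩

theorem twistedCoverGraph_adj_of_ne {e f : G.edgeSet} (hef : e ≠ f) {x y : R}
    (h : (twistedCoverGraph σ τ).Adj (e, x) (f, y)) : ∃ d d' : G.Dart, d.fst = d'.fst ∧
      d.edge = e ∧ d'.edge = f ∧ σ d * x + τ d = σ d' * y + τ d' := by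
  rcases h with ⟨h, -⟩ | ⟨-, h⟩
  · exact absurd h hef
  · exact h

noncomputable def twistedCover [Fintype R] : DPCover G.lineGraph (twistedCoverGraph σ τ) where
  L e := {e} ×ˢ univ
  part w := ⟨w.1, by simp, fun e he => (mem_singleton.1 (mem_product.1 he).1).symm⟩
  clique e p hp q hq hpq := by
    simp only [mem_product, mem_singleton, mem_univ, and_true] at hp hq
    exact Or.inl ⟨hp.trans hq.symm, fun h => hpq (Prod.ext (hp.trans hq.symm) h)⟩
  cross e f p hp q hq hpq := by
    simp only [mem_product, mem_singleton, mem_univ, and_true] at hp hq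
    rcases hpq with ⟨h, -⟩ | ⟨h, d, d', hfst, hd, hd', -⟩
    · exact Or.inl (hp ▸ hq ▸ h)
    · refine Or.inr (lineGraph_adj_iff_exists.2 ⟨hp ▸ hq ▸ h, d.fst, ?_, ?_⟩)
      · exact hp ▸ hd ▸ d.fst_mem_edge
      · exact hq ▸ hd' ▸ hfst ▸ d'.fst_mem_edge
  matching e f hef p hp q hq q' hq' hpq hpq' := by
    simp only [mem_product, mem_singleton, mem_univ, and_true] at hp hq hq'
    obtain ⟨p, x⟩ := p; obtain ⟨q, y⟩ := q; obtain ⟨q', y'⟩ := q'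
    subst hp hq hq'
    have hne := G.lineGraph.ne_of_adj hef
    obtain ⟨d₁, d₁', hfst₁, he₁, hf₁, hcol₁⟩ := twistedCoverGraph_adj_of_ne σ τ hne hpq
    obtain ⟨d₂, d₂', hfst₂, he₂, hf₂, hcol₂⟩ := twistedCoverGraph_adj_of_ne σ τ hne hpq'
    -- two distinct edges share at most one vertex, so both conflicts are read at the same darts
    have hv : d₁.fst = d₂.fst := by
      by_contra hv
      refine hne (Subtype.ext (Sym2.eq_of_ne_mem hv ?_ ?_ ?_ ?_))
      · exact he₁ ▸ d₁.fst_mem_edge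
      · exact he₂ ▸ d₂.fst_mem_edge
      · exact hf₁ ▸ hfst₁ ▸ d₁'.fst_mem_edge
      · exact hf₂ ▸ hfst₂ ▸ d₂'.fst_mem_edge
    obtain rfl : d₁ = d₂ := Dart.eq_of_fst_eq_of_edge_eq hv (he₁.trans he₂.symm)
    obtain rfl : d₁' = d₂' :=
      Dart.eq_of_fst_eq_of_edge_eq (hfst₁.symm.trans (hv.trans hfst₂)) (hf₁.trans hf₂.symm)
    have : (σ d₁' : R) * y = σ d₁' * y' := add_right_cancel (hcol₁.symm.trans hcol₂)
    simp only [Prod.mk.injEq, true_and]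
    exact (σ d₁').isUnit.mul_left_cancel this

theorem exists_color_of_hasColoring [Fintype R] (h : (twistedCover σ τ).HasColoring) :
    ∃ c : G.edgeSet → R, ∀ e f, ¬(twistedCoverGraph σ τ).Adj (e, c e) (f, c f) := by
  obtain ⟨I, hind, hmeet⟩ := h
  choose w hw using fun e => (hmeet e).exists
  have hw_eq : ∀ e, (e, (w e).2) = w e := fun e =>
    Prod.ext (mem_singleton.1 (mem_product.1 (hw e).2).1).symm rfl
  exact ⟨fun e => (w e).2, fun e f => hw_eq e ▸ hw_eq f ▸ hind _ (hw e).1 _ (hw f).1⟩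

/-- The colour that the edge `d.edge`, coloured `c`, shows at the vertex `d.fst`. -/
def twistedColor (c : G.edgeSet → R) (d : G.Dart) : R :=
  σ d * c ⟨d.edge, d.edge_mem⟩ + τ d

variable {σ τ} {c : G.edgeSet → R}

theorem twistedColor_injOn (hc : ∀ e f, ¬(twistedCoverGraph σ τ).Adj (e, c e) (f, c f)) (v : V) :
    Set.InjOn (twistedColor σ τ c) {d | d.fst = v} := by
  intro d hd d' hd' hcol
  by_contra hne
  have hedge : d.edge ≠ d'.edge := fun h => hne (Dart.eq_of_fst_eq_of_edge_eq (hd.trans hd'.symm) h)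
  exact hc _ _
    (Or.inr ⟨fun h => hedge (congrArg Subtype.val h), d, d', hd.trans hd'.symm, rfl, rfl, hcol⟩)

theorem sum_dartSign_mul_eq_zero [Fintype V] [DecidableRel G.Adj] (hσ : ∀ d, σ d.symm = -σ d)
    (c : G.edgeSet → R) :
    ∑ d : G.Dart, (σ d : R) * c ⟨d.edge, d.edge_mem⟩ = 0 :=
  sum_ninvolution Dart.symm (fun d => by simp [hσ, Dart.edge_symm]) (fun d _ => d.symm_ne)
    (fun _ => mem_univ _) Dart.symm_symm

variable [Fintype R] [Fintype V] [DecidableRel G.Adj]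

/-- Around each vertex the colours are pairwise distinct, so with `|R|` incident edges they
exhaust `R`. -/
theorem sum_twistedColor_fst_fiber [DecidableEq V] (hreg : G.IsRegularOfDegree (Fintype.card R))
    (hc : ∀ e f, ¬(twistedCoverGraph σ τ).Adj (e, c e) (f, c f)) (v : V) :
    ∑ d ∈ {d : G.Dart | d.fst = v}, twistedColor σ τ c d = ∑ x : R, x := by
  classical
  have hinj : Set.InjOn (twistedColor σ τ c) ({d : G.Dart | d.fst = v} : Finset G.Dart) := by
    simpa using twistedColor_injOn hc v
  have himage : ({d : G.Dart | d.fst = v} : Finset G.Dart).image (twistedColor σ τ c) = univ :=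
    eq_univ_of_card _ (by rw [card_image_of_injOn hinj, dart_fst_fiber_card_eq_degree, hreg v])
  rw [← himage, sum_image hinj]

theorem sum_twistedColor (hreg : G.IsRegularOfDegree (Fintype.card R))
    (hc : ∀ e f, ¬(twistedCoverGraph σ τ).Adj (e, c e) (f, c f)) :
    ∑ d, twistedColor σ τ c d = Fintype.card V • ∑ x : R, x := by
  classical
  rw [← sum_fiberwise univ (fun d : G.Dart => d.fst),
    sum_congr rfl fun v _ => sum_twistedColor_fst_fiber hreg hc v, sum_const, card_univ]

theorem sum_twist_eq_of_hasColoring (hreg : G.IsRegularOfDegree (Fintype.card R))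
    (hσ : ∀ d, σ d.symm = -σ d) (h : (twistedCover σ τ).HasColoring) :
    ∑ d, τ d = Fintype.card V • ∑ x : R, x := by
  obtain ⟨c, hc⟩ := exists_color_of_hasColoring σ τ h
  calc ∑ d, τ d = ∑ d, twistedColor σ τ c d := by
        simp only [twistedColor, sum_add_distrib, sum_dartSign_mul_eq_zero hσ, zero_add]
    _ = Fintype.card V • ∑ x : R, x := sum_twistedColor hreg hc

end TwistedCover

end SimpleGraph

theorem dRegular_DP_chromatic_index_ge_general {V : Type} [Fintype V] [Nonempty V]
    (G : SimpleGraph V) [DecidableRel G.Adj] (d : ℕ) (hd : 2 ≤ d)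
    (hreg : ∀ v : V, G.degree v = d) :
    ∃ (W : Type) (H : SimpleGraph W) (C : DPCover G.lineGraph H),
      C.IsFold d ∧ ¬ C.HasColoring := by
  classical
  have : NeZero d := ⟨by omega⟩
  have : Fact (1 < d) := ⟨by omega⟩
  have hreg' : G.IsRegularOfDegree (Fintype.card (ZMod d)) := by rwa [ZMod.card]
  obtain ⟨v⟩ := ‹Nonempty V›
  obtain ⟨w, hvw⟩ := G.degree_pos_iff_exists_adj v |>.1 (by rw [hreg]; omega)
  let τ : G.Dart → ZMod d :=
    Pi.single (⟨(v, w), hvw⟩ : G.Dart) (Fintype.card V • ∑ x : ZMod d, x + 1)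
  refine ⟨_, _, twistedCover (dartSign (ZMod d)) τ, fun e => by simp [twistedCover], fun h => ?_⟩
  have hsum := sum_twist_eq_of_hasColoring hreg' dartSign_symm h
  rw [Fintype.sum_pi_single'] at hsum
  exact one_ne_zero (add_eq_left.1 hsum)

/-- If `d ≥ 2` and `G` is a `d`-regular graph with at least one vertex, then
`χ'_DP(G) ≥ d + 1`: some `d`-fold cover of the line graph of `G` admits no coloring. -/
theorem dRegular_DP_chromatic_index_ge {V : Type} [Fintype V] [Nonempty V] [DecidableEq V]
    (G : SimpleGraph V) [DecidableRel G.Adj] (d : ℕ) (hd : 2 ≤ d)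
    (hreg : ∀ v : V, G.degree v = d) :
    ∃ (W : Type) (H : SimpleGraph W) (C : DPCover G.lineGraph H),
      C.IsFold d ∧ ¬ C.HasColoring :=
  dRegular_DP_chromatic_index_ge_general G d hd hreg
end

section
/- Let d ≥ 2, let G be a finite d-regular simple graph on an even number of vertices, let uv be an edge of G, and let G' = G − uv be the graph obtained by deleting the edge uv. Let C be a set of d colors and let f : E(G') → C be a proper edge coloring of G' (adjacent edges receive distinct colors). Then for every color c ∈ C, c is absent from all edges of G' incident to u if and only if c is absent from all edges of G' incident to v. (Since u and v both have degree d − 1 in G', each of them misses exactly one color, and these missing colors coincide.) -/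
/-!
The edges of colour `c` form a matching, so they cover an even number of vertices. A vertex
other than `u` and `v` keeps its `d` neighbours in `G - uv`, and its `d` incident edges carry
distinct colours out of `d`, so it is covered by colour `c`. Hence the uncovered vertices lie in
`{u, v}`, and since `|V|` is even there are evenly many of them: `u` and `v` are either both
covered or both uncovered.
-/

namespace SimpleGraph

variable {V C : Type*} {G H : SimpleGraph V}

theorem Coloring.eq_of_mem_of_mem_of_color_eq (f : H.lineGraph.Coloring C) {e₁ e₂ : H.edgeSet}
    {w : V} (h₁ : w ∈ (e₁ : Sym2 V)) (h₂ : w ∈ (e₂ : Sym2 V)) (hf : f e₁ = f e₂) : e₁ = e₂ := by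
  by_contra hne
  exact f.valid (lineGraph_adj_iff_exists.2 ⟨hne, w, h₁, h₂⟩) hf

def edgeColorClass (f : H.lineGraph.Coloring C) (c : C) : H.Subgraph where
  verts := {w | ∃ e : H.edgeSet, w ∈ (e : Sym2 V) ∧ f e = c}
  Adj x y := ∃ h : H.Adj x y, f ⟨s(x, y), h⟩ = c
  adj_sub := fun ⟨h, _⟩ => h
  edge_vert := fun ⟨h, hc⟩ => ⟨⟨s(_, _), h⟩, Sym2.mem_mk_left _ _, hc⟩
  symm := ⟨fun x y ⟨h, hc⟩ => ⟨h.symm, by simpa only [Sym2.eq_swap] using hc⟩⟩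

variable (f : H.lineGraph.Coloring C) (c : C)

theorem notMem_edgeColorClass_verts {w : V} :
    w ∉ (edgeColorClass f c).verts ↔ ∀ e : H.edgeSet, w ∈ (e : Sym2 V) → f e ≠ c := by
  simp only [edgeColorClass, Set.mem_ofPred_eq, not_exists, not_and, ne_eq]

theorem isMatching_edgeColorClass : (edgeColorClass f c).IsMatching := by
  rintro w ⟨⟨e, he⟩, hwe, hc⟩
  obtain ⟨x, rfl⟩ := Sym2.mem_iff_exists.1 hwe
  refine ⟨x, ⟨he, hc⟩, fun y ⟨hy, hyc⟩ => ?_⟩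
  have := f.eq_of_mem_of_mem_of_color_eq (Sym2.mem_mk_left w y) (Sym2.mem_mk_left w x)
    (hyc.trans hc.symm)
  exact Sym2.congr_right.1 (congrArg Subtype.val this)

theorem mem_edgeColorClass_verts_of_degree_eq_card [Fintype C] {w : V}
    [Fintype (H.neighborSet w)] (hw : H.degree w = Fintype.card C) :
    w ∈ (edgeColorClass f c).verts := by
  let g : H.neighborSet w → C := fun x => f ⟨s(w, x), x.2⟩
  have hg : Function.Injective g := fun x y hxy =>
    Subtype.ext <| Sym2.congr_right.1 <| congrArg Subtype.val <|
      f.eq_of_mem_of_mem_of_color_eq (Sym2.mem_mk_left w x) (Sym2.mem_mk_left w y) hxy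
  have hcard : Fintype.card (H.neighborSet w) = Fintype.card C := by
    rw [card_neighborSet_eq_degree, hw]
  obtain ⟨x, hx⟩ := ((Fintype.bijective_iff_injective_and_card g).2 ⟨hg, hcard⟩).2 c
  exact ⟨⟨s(w, x), x.2⟩, Sym2.mem_mk_left _ _, hx⟩

theorem neighborSet_deleteEdges_singleton_of_notMem {e : Sym2 V} {w : V} (hw : w ∉ e) :
    (G.deleteEdges {e}).neighborSet w = G.neighborSet w := by
  ext x
  simp only [mem_neighborSet, deleteEdges_adj, Set.mem_singleton_iff, and_iff_left_iff_imp]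
  rintro - rfl
  exact hw (Sym2.mem_mk_left w x)

theorem degree_deleteEdges_singleton_of_notMem {e : Sym2 V} {w : V} (hw : w ∉ e)
    [Fintype (G.neighborSet w)] [Fintype ((G.deleteEdges {e}).neighborSet w)] :
    (G.deleteEdges {e}).degree w = G.degree w := by
  simp only [← card_neighborSet_eq_degree]
  exact Fintype.card_congr (Equiv.setCongr (neighborSet_deleteEdges_singleton_of_notMem hw))

end SimpleGraph

open SimpleGraph

theorem Finset.mem_iff_mem_of_even_card {α : Type*} [Fintype α] [DecidableEq α]
    (hα : Even (Fintype.card α)) {s : Finset α} (hs : Even s.card) {u v : α}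
    (hcov : ∀ w, w ≠ u → w ≠ v → w ∈ s) : u ∈ s ↔ v ∈ s := by
  have mem_of_mem : ∀ {a b : α}, (∀ w, w ≠ a → w ≠ b → w ∈ s) → a ∈ s → b ∈ s := by
    intro a b hcov ha
    by_contra hb
    have hs_eq : s = univ.erase b := by
      ext w
      by_cases hwb : w = b
      · simp [hwb, hb]
      · by_cases hwa : w = a
        · simp [hwa ▸ ha, hwb]
        · simp [hcov w hwa hwb, hwb]
    rw [hs_eq, card_erase_of_mem (mem_univ b), card_univ] at hs
    have : 0 < Fintype.card α := Fintype.card_pos_iff.2 ⟨b⟩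
    obtain ⟨k, hk⟩ := hα
    obtain ⟨l, hl⟩ := hs
    omega
  exact ⟨mem_of_mem hcov, mem_of_mem fun w hv hu => hcov w hu hv⟩

theorem missing_color_at_u_iff_missing_at_v_general {V : Type*} [Fintype V]
    (G : SimpleGraph V) [DecidableRel G.Adj] (d : ℕ)
    (hreg : ∀ v : V, G.degree v = d) (heven : Even (Fintype.card V))
    (u v : V)
    (C : Type*) [Fintype C] (hC : Fintype.card C = d)
    (f : (G.deleteEdges {s(u, v)}).edgeSet → C)
    (hf : ∀ e₁ e₂ : (G.deleteEdges {s(u, v)}).edgeSet, e₁ ≠ e₂ →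
      (∃ w : V, w ∈ (e₁ : Sym2 V) ∧ w ∈ (e₂ : Sym2 V)) → f e₁ ≠ f e₂)
    (c : C) :
    (∀ e : (G.deleteEdges {s(u, v)}).edgeSet, u ∈ (e : Sym2 V) → f e ≠ c) ↔
    (∀ e : (G.deleteEdges {s(u, v)}).edgeSet, v ∈ (e : Sym2 V) → f e ≠ c) := by
  classical
  let f' : (G.deleteEdges {s(u, v)}).lineGraph.Coloring C :=
    Coloring.mk f fun hadj => hf _ _ hadj.1 (lineGraph_adj_iff_exists.1 hadj).2
  have hcov : ∀ w, w ≠ u → w ≠ v → w ∈ (edgeColorClass f' c).verts.toFinset := by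
    intro w hwu hwv
    have hw : w ∉ s(u, v) := by simp [hwu, hwv]
    rw [Set.mem_toFinset]
    exact mem_edgeColorClass_verts_of_degree_eq_card f' c
      (by rw [degree_deleteEdges_singleton_of_notMem hw, hreg, hC])
  have key := not_congr <|
    Finset.mem_iff_mem_of_even_card heven (isMatching_edgeColorClass f' c).even_card hcov
  simp only [Set.mem_toFinset, notMem_edgeColorClass_verts] at key
  exact key

/-- Let `d ≥ 2`, let `G` be a `d`-regular graph on an even number of vertices, let `uv` be an
edge of `G`, and let `G' = G - uv`. For every proper edge coloring of `G'` with a set of `d`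
colors, a color is missing at `u` if and only if it is missing at `v`. -/
theorem missing_color_at_u_iff_missing_at_v {V : Type*} [Fintype V] [DecidableEq V]
    (G : SimpleGraph V) [DecidableRel G.Adj] (d : ℕ) (hd : 2 ≤ d)
    (hreg : ∀ v : V, G.degree v = d) (heven : Even (Fintype.card V))
    (u v : V) (huv : G.Adj u v)
    (C : Type*) [Fintype C] (hC : Fintype.card C = d)
    (f : (G.deleteEdges {s(u, v)}).edgeSet → C)
    (hf : ∀ e₁ e₂ : (G.deleteEdges {s(u, v)}).edgeSet, e₁ ≠ e₂ →
      (∃ w : V, w ∈ (e₁ : Sym2 V) ∧ w ∈ (e₂ : Sym2 V)) → f e₁ ≠ f e₂)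
    (c : C) :
    (∀ e : (G.deleteEdges {s(u, v)}).edgeSet, u ∈ (e : Sym2 V) → f e ≠ c) ↔
    (∀ e : (G.deleteEdges {s(u, v)}).edgeSet, v ∈ (e : Sym2 V) → f e ≠ c) :=
  missing_color_at_u_iff_missing_at_v_general G d hreg heven u v C hC f hf c
end

section
/- For every integer n ≥ 3, the cycle graph C_n on n vertices admits a 2-fold cover (H, L) such that C_n has no (H, L)-coloring; consequently, the DP-chromatic number of C_n is at least 3 (and, combined with the bound χ_DP ≤ Δ + 1, equals 3). This holds regardless of the parity of n, in contrast to list coloring, where even cycles are 2-choosable. -/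
open SimpleGraph

/-- The cycle graph on `ℤ/nℤ`, with `i` adjacent to `i ± 1`. -/
def cycleOnZMod (n : ℕ) : SimpleGraph (ZMod n) :=
  SimpleGraph.fromRel (fun i j => j = i + 1)

/-!
A signing `σ` of the edges of a graph `G` defines a 2-fold cover in which the copy `(u, a)` is
matched with `(v, a + σ(uv))`. A coloring of it picks `g u` with `g u + g v = σ(uv) + 1` on every
edge; summed around `C_n` the left side telescopes to `0` in `ZMod 2`, forcing `∑ σ = n`.
Twisting the single edge `{0, 1}` by `n + 1` therefore yields an uncolorable 2-fold cover for
either parity of `n`.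

Conversely, by the matching condition a vertex of `H` outside `L v` has at most one neighbour in
`L v`, so when `|L v| = 3` there is always a choice in `L v` avoiding two given vertices. Coloring
`0, 1, …, n - 1` greedily, each choice avoiding the previous one and the one made at `0`, also
handles the closing edge `{n - 1, 0}`.
-/

theorem Finset.mem_singleton_product_univ {α β : Type*} [Fintype β] {a : α} {w : α × β} :
    w ∈ ({a} ×ˢ Finset.univ : Finset (α × β)) ↔ w.1 = a := by
  rw [Finset.mem_product, Finset.mem_singleton]
  exact and_iff_left (Finset.mem_univ _)

namespace DPCover

variable {V W : Type*} {G : SimpleGraph V} {H : SimpleGraph W} (C : DPCover G H)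

theorem eq_of_mem_L {x : W} {u v : V} (hu : x ∈ C.L u) (hv : x ∈ C.L v) : u = v :=
  (C.part x).unique hu hv

theorem hasColoring_of_forall_not_adj (c : V → W) (hc : ∀ u, c u ∈ C.L u)
    (hind : ∀ ⦃u v⦄, G.Adj u v → ¬ H.Adj (c u) (c v)) : C.HasColoring := by
  refine ⟨Set.range c, ?_, fun u => ⟨c u, ⟨⟨u, rfl⟩, hc u⟩, ?_⟩⟩
  · rintro _ ⟨u, rfl⟩ _ ⟨v, rfl⟩ hadj
    rcases C.cross u v _ (hc u) _ (hc v) hadj with rfl | huv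
    · exact H.irrefl hadj
    · exact hind huv hadj
  · rintro _ ⟨⟨v, rfl⟩, hv⟩
    rw [C.eq_of_mem_L (hc v) hv]

theorem card_filter_adj_le_one {x : W} {v : V} (hx : x ∉ C.L v) [DecidablePred (H.Adj x)] :
    ((C.L v).filter (H.Adj x)).card ≤ 1 := by
  obtain ⟨u, hu, -⟩ := C.part x
  refine Finset.card_le_one.mpr fun y hy y' hy' => ?_
  rw [Finset.mem_filter] at hy hy'
  rcases C.cross u v x hu y hy.1 hy.2 with rfl | huv
  · exact absurd hu hx
  · exact C.matching u v huv x hu y hy.1 y' hy'.1 hy.2 hy'.2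

theorem exists_mem_L_not_adj {x x' : W} {v : V} (hv : 2 < (C.L v).card)
    (hx : x ∉ C.L v) (hx' : x' ∉ C.L v) : ∃ y ∈ C.L v, ¬ H.Adj x y ∧ ¬ H.Adj x' y := by
  classical
  by_contra! h
  have hcover : C.L v ⊆ (C.L v).filter (H.Adj x) ∪ (C.L v).filter (H.Adj x') := by
    intro y hy
    by_cases hxy : H.Adj x y
    · exact Finset.mem_union_left _ (Finset.mem_filter.mpr ⟨hy, hxy⟩)
    · exact Finset.mem_union_right _ (Finset.mem_filter.mpr ⟨hy, h y hy hxy⟩)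
  have := (Finset.card_le_card hcover).trans (Finset.card_union_le _ _)
  have := C.card_filter_adj_le_one hx
  have := C.card_filter_adj_le_one hx'
  omega

theorem exists_chain (hL : ∀ v, 2 < (C.L v).card) {n : ℕ} {p : ℕ → V}
    (hp : Set.InjOn p (Set.Iio n)) {x₀ : W} (hx₀ : x₀ ∈ C.L (p 0)) :
    ∃ f : ℕ → W, f 0 = x₀ ∧ (∀ m < n, f m ∈ C.L (p m)) ∧
      ∀ m, m + 1 < n → ¬ H.Adj (f m) (f (m + 1)) ∧ ¬ H.Adj x₀ (f (m + 1)) := by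
  -- stated for all `m` and `x`, so that `choose` returns a total successor function
  have step : ∀ m x, ∃ y, x ∈ C.L (p m) → m + 1 < n →
      y ∈ C.L (p (m + 1)) ∧ ¬ H.Adj x y ∧ ¬ H.Adj x₀ y := by
    intro m x
    by_cases h : x ∈ C.L (p m) ∧ m + 1 < n
    · have hx : x ∉ C.L (p (m + 1)) := fun hx =>
        absurd (hp (Set.mem_Iio.mpr (by omega)) h.2 (C.eq_of_mem_L h.1 hx)) (by omega)
      have hx₀' : x₀ ∉ C.L (p (m + 1)) := fun hx =>
        absurd (hp (Set.mem_Iio.mpr (by omega)) h.2 (C.eq_of_mem_L hx₀ hx)) (by omega)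
      obtain ⟨y, hy⟩ := C.exists_mem_L_not_adj (hL _) hx hx₀'
      exact ⟨y, fun _ _ => hy⟩
    · exact ⟨x, fun hx hm => absurd ⟨hx, hm⟩ h⟩
  choose next hnext using step
  let f : ℕ → W := fun m => Nat.rec x₀ next m
  have hmem : ∀ m < n, f m ∈ C.L (p m) := by
    intro m
    induction m with
    | zero => exact fun _ => hx₀
    | succ m ih => exact fun hm => (hnext m (f m) (ih (by omega)) hm).1
  exact ⟨f, rfl, hmem, fun m hm => (hnext m (f m) (hmem m (by omega)) hm).2⟩

end DPCover

section SignedCover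

variable {V : Type*} (G : SimpleGraph V) (σ : Sym2 V → ZMod 2)

/-- The 2-fold cover of `G` defined by a signing `σ` of its edges: over an edge `uv`, the copy
`(u, a)` is matched with `(v, a + σ(uv))`. -/
def signedCoverGraph : SimpleGraph (V × ZMod 2) where
  Adj p q := (p.1 = q.1 ∧ p.2 ≠ q.2) ∨ (G.Adj p.1 q.1 ∧ p.2 + q.2 = σ s(p.1, q.1))
  symm := ⟨fun p q => by
    rintro (⟨h1, h2⟩ | ⟨h1, h2⟩)
    · exact .inl ⟨h1.symm, h2.symm⟩
    · exact .inr ⟨h1.symm, by rwa [add_comm, Sym2.eq_swap]⟩⟩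
  loopless := ⟨fun p => by simp⟩

def signedCover : DPCover G (signedCoverGraph G σ) where
  L u := {u} ×ˢ Finset.univ
  part w := ⟨w.1, Finset.mem_singleton_product_univ.mpr rfl,
    fun _ hu => (Finset.mem_singleton_product_univ.mp hu).symm⟩
  clique u x hx y hy hxy := by
    rw [Finset.mem_singleton_product_univ] at hx hy
    exact .inl ⟨hx.trans hy.symm, fun h => hxy (Prod.ext (hx.trans hy.symm) h)⟩
  cross u v x hx y hy hxy := by
    rw [Finset.mem_singleton_product_univ] at hx hy
    subst hx hy
    exact hxy.imp And.left And.left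
  matching u v huv x hx y hy y' hy' hxy hxy' := by
    rw [Finset.mem_singleton_product_univ] at hx hy hy'
    subst hx
    have hne : x.1 ≠ v := huv.ne
    rcases hxy with ⟨h, -⟩ | ⟨-, h⟩
    · exact absurd (h.trans hy) hne
    rcases hxy' with ⟨h', -⟩ | ⟨-, h'⟩
    · exact absurd (h'.trans hy') hne
    rw [hy] at h
    rw [hy'] at h'
    exact Prod.ext (hy.trans hy'.symm) (add_left_cancel (h.trans h'.symm))

theorem signedCover_isFold : (signedCover G σ).IsFold 2 := fun u => by
  simp [signedCover]

theorem exists_add_ne_of_signedCover_hasColoring (h : (signedCover G σ).HasColoring) :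
    ∃ g : V → ZMod 2, ∀ ⦃u v⦄, G.Adj u v → g u + g v ≠ σ s(u, v) := by
  obtain ⟨I, hind, hsel⟩ := h
  choose c hc _ using hsel
  have hcu : ∀ u, (c u).1 = u := fun u => Finset.mem_singleton_product_univ.mp (hc u).2
  refine ⟨fun u => (c u).2, fun u v huv hσ => hind _ (hc u).1 _ (hc v).1 (.inr ?_)⟩
  rw [hcu, hcu]
  exact ⟨huv, hσ⟩

end SignedCover

theorem ZMod.natCast_injOn_Iio (n : ℕ) : Set.InjOn (fun m : ℕ => (m : ZMod n)) (Set.Iio n) :=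
  fun i hi j hj hij => by
    rw [← ZMod.val_natCast_of_lt hi, ← ZMod.val_natCast_of_lt hj]
    exact congrArg ZMod.val hij

theorem ZMod.eq_add_one_of_ne {a b : ZMod 2} (h : a ≠ b) : a = b + 1 := by
  revert a b; decide

section Cycle

variable {n : ℕ}

theorem cycleOnZMod_adj_add_one (h : (1 : ZMod n) ≠ 0) (i : ZMod n) :
    (cycleOnZMod n).Adj i (i + 1) :=
  (SimpleGraph.fromRel_adj _ _ _).mpr ⟨left_ne_add.mpr h, .inl rfl⟩

theorem ZMod.sum_eq_natCast_of_forall_add_ne [NeZero n] (σ g : ZMod n → ZMod 2)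
    (hg : ∀ i, g i + g (i + 1) ≠ σ i) : ∑ i, σ i = n := by
  have hsum : ∑ i, (g i + g (i + 1)) = 0 := by
    rw [Finset.sum_add_distrib,
      Fintype.sum_equiv (Equiv.addRight 1) (fun i => g (i + 1)) g (fun _ => rfl),
      CharTwo.add_self_eq_zero]
  simp_rw [fun i => ZMod.eq_add_one_of_ne (hg i), Finset.sum_add_distrib] at hsum
  simpa [ZMod.card] using CharTwo.add_eq_zero.mp hsum

/-- Twisting one edge by `n + 1` makes the total sign differ from `n` for either parity. -/
def cycleTwist (n : ℕ) (e : Sym2 (ZMod n)) : ZMod 2 :=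
  if e = s(0, 1) then n + 1 else 0

theorem sum_cycleTwist [NeZero n] (h2 : (2 : ZMod n) ≠ 0) :
    ∑ i : ZMod n, cycleTwist n s(i, i + 1) = n + 1 := by
  have hedge : ∀ i : ZMod n, s(i, i + 1) = s(0, 1) ↔ i = 0 := by
    intro i
    rw [Sym2.eq_iff]
    constructor
    · rintro (⟨rfl, -⟩ | ⟨rfl, h⟩)
      · rfl
      · exact absurd (by linear_combination h) h2
    · rintro rfl
      exact .inl ⟨rfl, zero_add 1⟩
  simp only [cycleTwist, hedge, Finset.sum_ite_eq', Finset.mem_univ, if_true]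

theorem signedCover_cycleOnZMod_not_hasColoring [NeZero n] (h1 : (1 : ZMod n) ≠ 0)
    {σ : Sym2 (ZMod n) → ZMod 2} (hσ : ∑ i, σ s(i, i + 1) ≠ n) :
    ¬ (signedCover (cycleOnZMod n) σ).HasColoring := fun h => by
  obtain ⟨g, hg⟩ := exists_add_ne_of_signedCover_hasColoring _ _ h
  exact hσ <| ZMod.sum_eq_natCast_of_forall_add_ne _ g fun i =>
    hg (cycleOnZMod_adj_add_one h1 i)

end Cycle

theorem cycleOnZMod_dpColorable_three (n : ℕ) [NeZero n] : DPColorable (cycleOnZMod n) 3 := by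
  intro W H C hC
  have hL : ∀ v, 2 < (C.L v).card := fun v => by rw [hC v]; norm_num
  obtain ⟨x₀, hx₀⟩ : (C.L 0).Nonempty := Finset.card_pos.mp (by have := hL 0; omega)
  obtain ⟨f, hf0, hmem, hadj⟩ :=
    C.exists_chain hL (ZMod.natCast_injOn_Iio n) (by simpa using hx₀)
  refine C.hasColoring_of_forall_not_adj (fun i => f i.val)
    (fun i => by simpa using hmem _ i.val_lt) ?_
  suffices h : ∀ i : ZMod n, ¬ H.Adj (f i.val) (f (i + 1).val) by
    intro u v huv
    rcases ((SimpleGraph.fromRel_adj _ _ _).mp huv).2 with rfl | rfl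
    · exact h u
    · exact fun hadj => h v hadj.symm
  intro i
  have hsucc : i + 1 = ((i.val + 1 : ℕ) : ZMod n) := by simp
  rcases Nat.lt_or_ge (i.val + 1) n with hi | hi
  · rw [hsucc, ZMod.val_natCast_of_lt hi]
    exact (hadj _ hi).1
  · have hlast : i.val + 1 = n := by have := i.val_lt; omega
    rw [hsucc, hlast, ZMod.natCast_self, ZMod.val_zero, hf0]
    rcases Nat.eq_zero_or_eq_succ_pred i.val with h | h
    · rw [h, hf0]
      exact H.irrefl
    · rw [h]
      exact fun hadj' => (hadj _ (by omega)).2 hadj'.symm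

/-- For every `n ≥ 3`, the cycle `C_n` admits a 2-fold cover with no coloring (so
`χ_DP(C_n) ≥ 3`, regardless of the parity of `n`); moreover every 3-fold cover of `C_n`
admits a coloring, so `χ_DP(C_n) = 3`. -/
theorem cycle_DP_chromatic_number_three (n : ℕ) (hn : 3 ≤ n) :
    (∃ (W : Type) (H : SimpleGraph W) (C : DPCover (cycleOnZMod n) H),
      C.IsFold 2 ∧ ¬ C.HasColoring) ∧
    DPColorable (cycleOnZMod n) 3 := by
  have : NeZero n := ⟨by omega⟩
  have h1 : (1 : ZMod n) ≠ 0 := ZMod.one_eq_zero_iff.not.mpr (by omega)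
  have h2 : (2 : ZMod n) ≠ 0 := by
    rw [← Nat.cast_ofNat, Ne, ZMod.natCast_eq_zero_iff]
    exact fun h => absurd (Nat.le_of_dvd two_pos h) (by omega)
  refine ⟨⟨_, _, signedCover (cycleOnZMod n) (cycleTwist n), signedCover_isFold _ _, ?_⟩,
    cycleOnZMod_dpColorable_three n⟩
  refine signedCover_cycleOnZMod_not_hasColoring h1 ?_
  rw [sum_cycleTwist h2]
  exact fun h => one_ne_zero (add_eq_left.mp h)
end
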